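/- For all integers t ≥ 1 and m_1, …, m_t with each m_i ≥ 2 and m_1 + ⋯ + m_t = 10, the Honeymoon Oberwolfach Problem HOP(2m_1, …, 2m_t) has a solution; that is, the complete graph K_{20} admits a semi-uniform 1-factorization of type (2m_1, …, 2m_t). -/

import Mathlib

open SimpleGraph

/-- `M` is a 1-factorization of the complete graph `K_{2n}` on the vertex set `Fin (2*n)`:
a partition of its edge set into `2*n - 2 + 1` (which equals `2*n - 1` for `n ≥ 1`)
perfect matchings, each matching being recorded as the simple graph consisting of its edges. -/
def IsOneFactorization (n : ℕ)
    (M : Fin (2 * n - 2 + 1) → SimpleGraph (Fin (2 * n))) : Prop :=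
  (∀ i : Fin (2 * n - 2 + 1), ∀ v : Fin (2 * n), ∃! w, (M i).Adj v w) ∧
  (∀ v w : Fin (2 * n), v ≠ w → ∃! i : Fin (2 * n - 2 + 1), (M i).Adj v w)

/-- `M` is a semi-uniform 1-factorization of `K_{2n}` of type `(l 0, …, l (t-1))`:
a 1-factorization `M 0, M 1, …` of `K_{2n}` such that for every index `i ≠ 0` the multiset
of cardinalities of the connected components of the spanning subgraph with edge set
`M 0 ∪ M i` equals the multiset `{l 0, …, l (t-1)}` (expressed via a size-preserving
bijection between the components and `Fin t`). -/
def IsSemiUniformOneFactorization (n : ℕ) {t : ℕ} (l : Fin t → ℕ)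
    (M : Fin (2 * n - 2 + 1) → SimpleGraph (Fin (2 * n))) : Prop :=
  IsOneFactorization n M ∧
  ∀ i : Fin (2 * n - 2 + 1), i ≠ 0 →
    ∃ e : (M 0 ⊔ M i).ConnectedComponent ≃ Fin t,
      ∀ c : (M 0 ⊔ M i).ConnectedComponent, c.supp.ncard = l (e c)

/-- The Honeymoon Oberwolfach Problem `HOP(l 0, …, l (t-1))`
(where `l 0 + ⋯ + l (t-1) = 2*n`) has a solution, i.e. the complete graph `K_{2n}`
admits a semi-uniform 1-factorization of type `(l 0, …, l (t-1))`. -/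
def HOPSolvable (n : ℕ) {t : ℕ} (l : Fin t → ℕ) : Prop :=
  ∃ M : Fin (2 * n - 2 + 1) → SimpleGraph (Fin (2 * n)),
    IsSemiUniformOneFactorization n l M

/-!
Every type `(2m_1, …, 2m_t)` with `∑ m_i = 10` is realised by a 1-factorization of `K_{20}`
invariant under `ℤ/9`. The vertices are `ℤ/9 × ℤ/2` together with two points `∞₀, ∞₁` fixed by
the translations; `M_0 = {(x, 0)(x, 1)} ∪ {∞₀∞₁}` is translation invariant, and the other
eighteen factors are the nine translates of each of two base factors `B_0, B_1`, found by a
computer search. A translation fixing `M_0` is an isomorphism `M_0 ∪ B_j ≅ M_0 ∪ (B_j + i)`, so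
only the components of the two graphs `M_0 ∪ B_j` have to be computed; they are certified by a
representative function on the vertices that is constant along edges and reachable from every
vertex.
-/

open Finset

namespace SimpleGraph

variable {V W : Type*}

def fromFun (f : V → V) : SimpleGraph V := fromRel fun v w => f v = w

theorem fromFun_adj {f : V → V} {v w : V} :
    (fromFun f).Adj v w ↔ v ≠ w ∧ (f v = w ∨ f w = v) :=
  fromRel_adj _ _ _

theorem fromFun_adj_iff {f : V → V} (hf : Function.Involutive f) (hfix : ∀ v, f v ≠ v)
    {v w : V} : (fromFun f).Adj v w ↔ f v = w := by
  rw [fromFun_adj]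
  constructor
  · rintro ⟨-, h | rfl⟩
    · exact h
    · exact hf w
  · rintro rfl
    exact ⟨(hfix v).symm, Or.inl rfl⟩

theorem reachable_fromFun (f : V → V) (v : V) : (fromFun f).Reachable v (f v) := by
  by_cases h : f v = v
  · rw [h]
  · exact (fromFun_adj.2 ⟨Ne.symm h, Or.inl rfl⟩).reachable

theorem reachable_iterate_comp (p q : V → V) (v : V) (k : ℕ) :
    (fromFun p ⊔ fromFun q).Reachable v ((q ∘ p)^[k] v) := by
  induction k with
  | zero => rfl
  | succ k ih =>
    rw [Function.iterate_succ_apply']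
    exact ih.trans (((reachable_fromFun p _).mono le_sup_left).trans
      ((reachable_fromFun q _).mono le_sup_right))

def Iso.fromFunSup (e : V ≃ W) {p q : V → V} {p' q' : W → W}
    (hp : Function.Semiconj e p p') (hq : Function.Semiconj e q q') :
    fromFun p ⊔ fromFun q ≃g fromFun p' ⊔ fromFun q' where
  toEquiv := e
  map_rel_iff' {a b} := by
    simp only [sup_adj, fromFun_adj, ← hp.eq, ← hq.eq, ne_eq, e.apply_eq_iff_eq]

theorem Iso.ncard_supp_connectedComponentEquiv {G : SimpleGraph V} {G' : SimpleGraph W}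
    (φ : G ≃g G') (C : G.ConnectedComponent) :
    (φ.connectedComponentEquiv C).supp.ncard = C.supp.ncard := by
  rw [← Nat.card_coe_set_eq, ← Nat.card_coe_set_eq]
  exact (Nat.card_congr (ConnectedComponent.isoEquivSupp φ C)).symm

theorem reachable_iff_of_rep {G : SimpleGraph V} {r : V → V}
    (hadj : ∀ v w, G.Adj v w → r v = r w) (hreach : ∀ v, G.Reachable v (r v)) {v w : V} :
    G.Reachable v w ↔ r v = r w := by
  constructor
  · rintro ⟨walk⟩
    induction walk with
    | nil => rfl
    | cons h _ ih => exact (hadj _ _ h).trans ih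
  · intro h
    exact (hreach v).trans (h ▸ (hreach w).symm)

theorem ConnectedComponent.exists_equiv_of_rep [Fintype V] [DecidableEq V] {G : SimpleGraph V}
    {r : V → V} (hadj : ∀ v w, G.Adj v w → r v = r w) (hreach : ∀ v, G.Reachable v (r v)) :
    ∃ e : G.ConnectedComponent ≃ {v // r v = v}, ∀ C, C.supp.ncard = #{w | r w = e C} := by
  have hiff := fun v w => reachable_iff_of_rep hadj hreach (v := v) (w := w)
  have hidem : ∀ v, r (r v) = r v := fun v => ((hiff _ _).1 (hreach v)).symm
  let f : G.ConnectedComponent → {v // r v = v} :=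
    ConnectedComponent.lift (fun v => ⟨r v, hidem v⟩) fun v w p _ =>
      Subtype.ext ((hiff v w).1 p.reachable)
  have hf : Function.Bijective f := by
    refine ⟨fun C C' => ?_, fun v => ⟨G.connectedComponentMk v, Subtype.ext v.2⟩⟩
    induction C using ConnectedComponent.ind
    induction C' using ConnectedComponent.ind
    intro h
    exact ConnectedComponent.sound ((hiff _ _).2 (congrArg Subtype.val h))
  refine ⟨Equiv.ofBijective f hf, fun C => ?_⟩
  induction C using ConnectedComponent.ind with | h v => ?_
  rw [← Set.ncard_coe_finset]
  congr 1
  ext w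
  simp [f, hiff, eq_comm]

end SimpleGraph

theorem Fintype.exists_equiv_of_map_univ_eq {α β γ : Type*} [Fintype α] [Fintype β]
    [DecidableEq γ] {f : α → γ} {g : β → γ} (h : univ.val.map f = univ.val.map g) :
    ∃ e : α ≃ β, ∀ a, f a = g (e a) := by
  have hcard : ∀ c, Fintype.card {a // f a = c} = Fintype.card {b // g b = c} := by
    intro c
    have := congrArg (Multiset.count c) h
    simp only [Multiset.count_map, Fintype.card_subtype] at this ⊢
    simpa [eq_comm, ← Finset.filter_val] using this
  exact ⟨Equiv.ofFiberEquiv fun c => Fintype.equivOfCardEq (hcard c),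
    fun a => (Equiv.ofFiberEquiv_map _ a).symm⟩

theorem List.foldr_min_mem {α : Type*} [LinearOrder α] (a : α) (l : List α) :
    l.foldr min a ∈ a :: l := by
  induction l with
  | nil => exact List.mem_singleton_self a
  | cons b l ih =>
    rw [List.foldr_cons]
    rcases min_choice b (l.foldr min a) with h | h <;> rw [h]
    · exact List.mem_cons_of_mem _ List.mem_cons_self
    · exact List.cons_subset_cons a (List.subset_cons_self b l) ih

section AlternatingRep

variable {V : Type*}

def alternatingRep [LinearOrder V] (p q : V → V) (N : ℕ) (v : V) : V :=
  (List.iterate (q ∘ p) v N ++ List.iterate (q ∘ p) (p v) N).foldr min v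

theorem reachable_alternatingRep [LinearOrder V] (p q : V → V) (N : ℕ) (v : V) :
    (fromFun p ⊔ fromFun q).Reachable v (alternatingRep p q N v) := by
  have hmem := List.foldr_min_mem v (List.iterate (q ∘ p) v N ++ List.iterate (q ∘ p) (p v) N)
  simp only [List.mem_cons, List.mem_append, List.mem_iterate] at hmem
  rcases hmem with h | ⟨k, -, h⟩ | ⟨k, -, h⟩ <;> rw [alternatingRep, h]
  · exact reachable_iterate_comp p q v k
  · exact ((reachable_fromFun p v).mono le_sup_left).trans (reachable_iterate_comp p q _ k)

def repSizes [Fintype V] [DecidableEq V] (r : V → V) : Multiset ℕ :=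
  (univ : Finset {v // r v = v}).val.map fun v => #{w | r w = v.val}

theorem exists_componentEquiv_fromFun_sup [Fintype V] [LinearOrder V] {p q : V → V} {N : ℕ}
    (hrep : ∀ v, alternatingRep p q N (p v) = alternatingRep p q N v ∧
      alternatingRep p q N (q v) = alternatingRep p q N v)
    {t : ℕ} {l : Fin t → ℕ} (hsizes : repSizes (alternatingRep p q N) = univ.val.map l) :
    ∃ e : (fromFun p ⊔ fromFun q).ConnectedComponent ≃ Fin t, ∀ C, C.supp.ncard = l (e C) := by
  have hadj : ∀ v w, (fromFun p ⊔ fromFun q).Adj v w →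
      alternatingRep p q N v = alternatingRep p q N w := by
    rintro v w (⟨-, rfl | rfl⟩ | ⟨-, rfl | rfl⟩)
    exacts [(hrep v).1.symm, (hrep w).1, (hrep v).2.symm, (hrep w).2]
  obtain ⟨e₁, he₁⟩ :=
    ConnectedComponent.exists_equiv_of_rep hadj (reachable_alternatingRep p q N)
  obtain ⟨e₂, he₂⟩ := Fintype.exists_equiv_of_map_univ_eq hsizes
  exact ⟨e₁.trans e₂, fun C => (he₁ C).trans (he₂ _)⟩

end AlternatingRep

theorem isOneFactorization_fromFun {n : ℕ} {p : Fin (2 * n - 2 + 1) → Fin (2 * n) → Fin (2 * n)}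
    (hp : ∀ k v, p k (p k v) = v ∧ p k v ≠ v) (hcover : ∀ v w, v ≠ w → #{k | p k v = w} = 1) :
    IsOneFactorization n fun k => fromFun (p k) := by
  have hadj k {v w} := fromFun_adj_iff (fun v => (hp k v).1) (fun v => (hp k v).2)
    (v := v) (w := w)
  refine ⟨fun k v => ⟨p k v, hadj k |>.2 rfl, fun w hw => (hadj k |>.1 hw).symm⟩,
    fun v w hvw => ?_⟩
  simp only [hadj]
  exact (Fintype.existsUnique_iff_card_one _).2 (hcover v w hvw)

namespace CyclicConstruction

/- Vertex `2 * x + b` (`x < 9`, `b < 2`) stands for `(x, b) ∈ ℤ/9 × ℤ/2`, and `18`, `19` for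
`∞₀`, `∞₁`. -/

def partner (v : Fin 20) : Fin 20 := v ^^^ 1

def translate (i : Fin 9) : Equiv.Perm (Fin 20) where
  toFun v := if h : v.val < 18 then ⟨(v.val + 2 * i.val) % 18, by omega⟩ else v
  invFun v := if h : v.val < 18 then ⟨(v.val + 16 * i.val) % 18, by omega⟩ else v
  left_inv v := by
    by_cases h : v.val < 18 <;> ext <;> simp [h, Nat.mod_lt]
    omega
  right_inv v := by
    by_cases h : v.val < 18 <;> ext <;> simp [h, Nat.mod_lt]
    omega

theorem partner_partner : ∀ v, partner (partner v) = v ∧ partner v ≠ v := by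
  decide

theorem translate_partner : ∀ i v, translate i (partner v) = partner (translate i v) := by
  decide

/-- `M_0` is `partner`; `M_{1 + i + 9 j}` is the translate by `i` of the base factor `B j`. -/
def family (B : Fin 2 → Fin 20 → Fin 20) (k : Fin 19) : Fin 20 → Fin 20 :=
  if k = 0 then partner
  else (translate ⟨(k.val - 1) % 9, by omega⟩).conj (B ⟨(k.val - 1) / 9, by omega⟩)

theorem family_family {B : Fin 2 → Fin 20 → Fin 20} (hB : ∀ j v, B j (B j v) = v ∧ B j v ≠ v)
    (k : Fin 19) (v : Fin 20) : family B k (family B k v) = v ∧ family B k v ≠ v := by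
  unfold family
  split_ifs
  · exact partner_partner v
  · simp only [Equiv.conj_apply, Equiv.symm_apply_apply, (hB _ _).1, Equiv.apply_symm_apply,
      ne_eq, ← Equiv.eq_symm_apply, true_and]
    exact (hB _ _).2

structure Certificate where
  type : Multiset ℕ
  bases : Fin 2 → List (Fin 20)

def Certificate.base (c : Certificate) (j : Fin 2) (v : Fin 20) : Fin 20 := (c.bases j).getD v v

def Certificate.Valid (c : Certificate) : Prop :=
  (∀ j v, c.base j (c.base j v) = v ∧ c.base j v ≠ v) ∧
  (∀ v w, v ≠ w → #{k | family c.base k v = w} = 1) ∧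
  ∀ j, (∀ v, alternatingRep partner (c.base j) 10 (partner v) =
        alternatingRep partner (c.base j) 10 v ∧
      alternatingRep partner (c.base j) 10 (c.base j v) = alternatingRep partner (c.base j) 10 v) ∧
    repSizes (alternatingRep partner (c.base j) 10) = c.type

instance : DecidablePred Certificate.Valid := fun c => by
  unfold Certificate.Valid
  infer_instance

theorem Certificate.Valid.hopSolvable {c : Certificate} (hc : c.Valid) {t : ℕ} {l : Fin t → ℕ}
    (hl : univ.val.map l = c.type) : HOPSolvable 10 l := by
  obtain ⟨hinv, hcover, hbase⟩ := hc
  refine ⟨fun k => fromFun (family c.base k),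
    isOneFactorization_fromFun (family_family hinv) hcover, fun k hk => ?_⟩
  obtain ⟨hrep, hsizes⟩ := hbase ⟨(k.val - 1) / 9, by omega⟩
  obtain ⟨e, he⟩ := exists_componentEquiv_fromFun_sup hrep (hsizes.trans hl.symm)
  let φ : fromFun partner ⊔ fromFun (c.base ⟨(k.val - 1) / 9, by omega⟩) ≃g
      fromFun (family c.base 0) ⊔ fromFun (family c.base k) :=
    Iso.fromFunSup (translate _) (translate_partner _)
      (by rw [family, if_neg hk]; exact Equiv.semiconj_conj _ _)
  refine ⟨φ.connectedComponentEquiv.symm.trans e, fun C => ?_⟩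
  rw [Equiv.trans_apply, ← he, ← φ.ncard_supp_connectedComponentEquiv, Equiv.apply_symm_apply]

def certificates : List Certificate := [
  ⟨{20},
    ![[2, 13, 0, 14, 19, 10, 18, 17, 11, 12, 5, 8, 9, 1, 3, 16, 15, 7, 6, 4],
      [4, 10, 8, 16, 0, 12, 14, 9, 2, 7, 1, 15, 5, 18, 6, 11, 3, 19, 13, 17]]⟩,
  ⟨{4, 16},
    ![[2, 12, 0, 15, 19, 10, 9, 8, 7, 6, 5, 14, 1, 17, 11, 3, 18, 13, 16, 4],
      [4, 10, 8, 16, 0, 12, 14, 15, 2, 11, 1, 9, 5, 18, 6, 7, 3, 19, 13, 17]]⟩,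
  ⟨{6, 14},
    ![[2, 13, 0, 5, 19, 3, 9, 12, 18, 6, 17, 14, 7, 1, 11, 16, 15, 10, 8, 4],
      [4, 10, 8, 16, 0, 12, 14, 11, 2, 17, 1, 7, 5, 18, 6, 19, 3, 9, 13, 15]]⟩,
  ⟨{8, 12},
    ![[2, 16, 0, 11, 19, 8, 18, 12, 5, 15, 17, 3, 7, 14, 13, 9, 1, 10, 6, 4],
      [4, 10, 8, 16, 0, 12, 14, 11, 2, 18, 1, 7, 5, 15, 6, 13, 3, 19, 9, 17]]⟩,
  ⟨{10, 10},
    ![[2, 5, 0, 14, 17, 1, 9, 10, 19, 6, 7, 13, 18, 11, 3, 16, 15, 4, 12, 8],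
      [4, 10, 8, 16, 0, 12, 14, 17, 2, 15, 1, 18, 5, 19, 6, 9, 3, 7, 11, 13]]⟩,
  ⟨{4, 4, 12},
    ![[2, 12, 0, 5, 19, 3, 11, 10, 18, 13, 7, 6, 1, 9, 17, 16, 15, 14, 8, 4],
      [4, 10, 8, 9, 0, 12, 14, 15, 2, 3, 1, 16, 5, 18, 6, 7, 11, 19, 13, 17]]⟩,
  ⟨{4, 6, 10},
    ![[2, 12, 0, 13, 19, 8, 11, 9, 5, 7, 18, 6, 1, 3, 17, 16, 15, 14, 10, 4],
      [4, 10, 8, 9, 0, 12, 14, 18, 2, 3, 1, 16, 5, 17, 6, 19, 11, 13, 7, 15]]⟩,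
  ⟨{4, 8, 8},
    ![[2, 12, 0, 8, 19, 11, 18, 10, 3, 13, 7, 5, 1, 9, 17, 16, 15, 14, 6, 4],
      [4, 10, 8, 16, 0, 12, 14, 15, 2, 18, 1, 13, 5, 11, 6, 7, 3, 19, 9, 17]]⟩,
  ⟨{6, 6, 8},
    ![[2, 12, 0, 6, 19, 9, 3, 13, 18, 5, 15, 16, 1, 7, 17, 10, 11, 14, 8, 4],
      [4, 10, 8, 18, 0, 12, 14, 17, 2, 19, 1, 13, 5, 11, 6, 16, 15, 7, 3, 9]]⟩,
  ⟨{4, 4, 4, 8},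
    ![[2, 12, 0, 8, 19, 18, 11, 10, 3, 13, 7, 6, 1, 9, 17, 16, 15, 14, 5, 4],
      [4, 10, 8, 9, 0, 12, 14, 15, 2, 3, 1, 13, 5, 11, 6, 7, 18, 19, 16, 17]]⟩,
  ⟨{4, 4, 6, 6},
    ![[2, 3, 0, 1, 19, 18, 13, 8, 7, 12, 15, 16, 9, 6, 17, 10, 11, 14, 5, 4],
      [4, 10, 8, 17, 0, 11, 14, 15, 2, 16, 1, 5, 18, 19, 6, 7, 9, 3, 12, 13]]⟩,
  ⟨{4, 4, 4, 4, 4},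
    ![[2, 3, 0, 1, 19, 18, 15, 14, 13, 12, 17, 16, 9, 8, 7, 6, 11, 10, 5, 4],
      [4, 5, 8, 9, 0, 1, 14, 15, 2, 3, 13, 12, 11, 10, 6, 7, 18, 19, 16, 17]]⟩]

theorem certificates_valid : ∀ c ∈ certificates, c.Valid := by
  decide +kernel

set_option maxRecDepth 10000 in
theorem exists_certificate {t : ℕ} (m : Fin t → ℕ) (hm : ∀ i, 2 ≤ m i) (hsum : ∑ i, m i = 10) :
    ∃ c ∈ certificates, univ.val.map (fun i => 2 * m i) = c.type := by
  have ht : t ≤ 5 := by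
    have := Finset.sum_le_sum fun i (_ : i ∈ univ) => hm i
    simp only [sum_const, card_univ, Fintype.card_fin, smul_eq_mul, hsum] at this
    omega
  have key : ∀ x ∈ Finset.Nat.antidiagonalTuple t 10, (∀ i, 2 ≤ x i) →
      ∃ c ∈ certificates, univ.val.map (fun i => 2 * x i) = c.type := by
    interval_cases t <;> decide
  exact key m (Finset.Nat.mem_antidiagonalTuple.2 hsum) hm

end CyclicConstruction

theorem hop_solvable_sum_eq_10_general (t : ℕ) (m : Fin t → ℕ)
    (hm : ∀ i, 2 ≤ m i) (hsum : ∑ i, m i = 10) :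
    HOPSolvable 10 (fun i => 2 * m i) := by
  obtain ⟨c, hc, hl⟩ := CyclicConstruction.exists_certificate m hm hsum
  exact (CyclicConstruction.certificates_valid c hc).hopSolvable hl

theorem hop_solvable_sum_eq_10 (t : ℕ) (ht : 1 ≤ t) (m : Fin t → ℕ)
    (hm : ∀ i, 2 ≤ m i) (hsum : ∑ i, m i = 10) :
    HOPSolvable 10 (fun i => 2 * m i) :=
  hop_solvable_sum_eq_10_general t m hm hsum
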